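/- arXiv:1804.10171 — 3 statements merged into one kernel-verified Lean document; each statement's English description precedes it below -/
import Mathlib

section
/- Let (X, ‖·‖) be a Banach space and T : X → X a C¹ map. Suppose there exist a nonnegative constant Y and a nonnegative, increasing, continuous function Z : [0,∞) → [0,∞) such that ‖T(x̄) − x̄‖ ≤ Y and ‖DT(x)‖ ≤ Z(‖x − x̄‖) for all x ∈ X. If there exists r̄ > 0 with Y + ∫₀^r̄ Z(s) ds < r̄ and Z(r̄) < 1, then T has a unique fixed point in the closed ball of radius r̄ centered at x̄. -/
/-!
Integrating `DT` along the segment from `x̄` to `x` bounds `‖T x - T x̄‖` by `∫₀^‖x - x̄‖ Z`, so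
`Y + ∫₀^r̄ Z < r̄` makes `T` map the closed ball `B(x̄, r̄)` into itself. As `Z` is increasing,
`‖DT‖ ≤ Z r̄ < 1` on the convex ball, so `T` is a contraction of this complete set and the
Banach fixed point theorem applies.
-/

open Set Metric intervalIntegral

theorem exists_unique_isFixedPt_of_lipschitzOnWith {α : Type*} [MetricSpace α] {f : α → α}
    {s : Set α} {K : NNReal} (hsc : IsComplete s) (hs : s.Nonempty) (hsf : MapsTo f s s)
    (hf : LipschitzOnWith K f s) (hK : K < 1) :
    ∃! x, x ∈ s ∧ f x = x := by
  obtain ⟨x₀, hx₀⟩ := hs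
  have hcontr : ContractingWith K (hsf.restrict f s s) :=
    ⟨hK, lipschitzOnWith_iff_restrict.mp hf⟩
  obtain ⟨x, hxs, hfx, -⟩ := hcontr.exists_fixedPoint' hsc hsf hx₀ (edist_ne_top _ _)
  refine ⟨x, ⟨hxs, hfx⟩, fun y ⟨hys, hfy⟩ => ?_⟩
  have hyx := hcontr.eq_or_edist_eq_top_of_fixedPoints (x := ⟨y, hys⟩) (y := ⟨x, hxs⟩)
    (Subtype.ext hfy) (Subtype.ext hfx)
  simpa [edist_ne_top] using hyx

section

variable {E F : Type*} [NormedAddCommGroup E] [NormedSpace ℝ E] [NormedAddCommGroup F]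
  [NormedSpace ℝ F] {f : E → F} {Z : ℝ → ℝ} {x₀ : E}

theorem norm_sub_le_integral_of_norm_fderiv_le [CompleteSpace F] (hf : ContDiff ℝ 1 f)
    (hZ : ContinuousOn Z (Ici 0)) (hfZ : ∀ x, ‖fderiv ℝ f x‖ ≤ Z ‖x - x₀‖) (x : E) :
    ‖f x - f x₀‖ ≤ ∫ s in 0..‖x - x₀‖, Z s := by
  rcases eq_or_ne x x₀ with rfl | hx
  · simp
  set c := ‖x - x₀‖
  set v := (c⁻¹ : ℝ) • (x - x₀)
  have hv : ‖v‖ = 1 := norm_smul_inv_norm (sub_ne_zero.mpr hx)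
  have hc : 0 ≤ c := norm_nonneg _
  have hγ : ∀ t, HasDerivAt (fun t : ℝ => x₀ + t • v) v t := fun t => by
    simpa using ((hasDerivAt_id t).smul_const v).const_add x₀
  have hderiv : ∀ t, HasDerivAt (fun t : ℝ => f (x₀ + t • v)) (fderiv ℝ f (x₀ + t • v) v) t :=
    fun t => ((hf.differentiable one_ne_zero _).hasFDerivAt).comp_hasDerivAt t (hγ t)
  have hcont : Continuous fun t : ℝ => fderiv ℝ f (x₀ + t • v) v := by
    have := hf.continuous_fderiv one_ne_zero
    fun_prop
  have hbound : ∀ t ∈ Ioc 0 c, ‖fderiv ℝ f (x₀ + t • v) v‖ ≤ Z t := fun t ht =>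
    calc ‖fderiv ℝ f (x₀ + t • v) v‖ ≤ ‖fderiv ℝ f (x₀ + t • v)‖ * ‖v‖ := ContinuousLinearMap.le_opNorm _ _
      _ ≤ Z t := by
        simpa [hv, norm_smul, abs_of_pos ht.1] using hfZ (x₀ + t • v)
  have hend : x₀ + c • v = x := by
    rw [smul_inv_smul₀ (norm_ne_zero_iff.mpr (sub_ne_zero.mpr hx)), add_sub_cancel]
  calc ‖f x - f x₀‖ = ‖∫ t in 0..c, fderiv ℝ f (x₀ + t • v) v‖ := by
        rw [integral_eq_sub_of_hasDerivAt (fun t _ => hderiv t) (hcont.intervalIntegrable _ _),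
          hend, zero_smul, add_zero]
    _ ≤ ∫ t in 0..c, Z t :=
        norm_integral_le_of_norm_le hc (.of_forall hbound)
          (hZ.mono (uIcc_of_le hc ▸ Icc_subset_Ici_self)).intervalIntegrable


theorem lipschitzOnWith_closedBall_of_norm_fderiv_le (hf : Differentiable ℝ f)
    (hZ : MonotoneOn Z (Ici 0)) (hfZ : ∀ x, ‖fderiv ℝ f x‖ ≤ Z ‖x - x₀‖) (r : ℝ) :
    LipschitzOnWith (Z r).toNNReal f (closedBall x₀ r) := by
  refine .of_dist_le_mul fun x hx y hy => ?_
  have hbound : ∀ z ∈ closedBall x₀ r, ‖fderiv ℝ f z‖ ≤ (Z r).toNNReal := fun z hz =>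
    calc ‖fderiv ℝ f z‖ ≤ Z ‖z - x₀‖ := hfZ z
      _ ≤ Z r := hZ (norm_nonneg _) (dist_nonneg.trans hz) (mem_closedBall_iff_norm.mp hz)
      _ ≤ (Z r).toNNReal := Real.le_coe_toNNReal _
  simpa only [dist_eq_norm] using
    (convex_closedBall x₀ r).norm_image_sub_le_of_norm_fderiv_le (fun z _ => hf z) hbound hy hx

theorem mapsTo_closedBall_of_add_integral_le [CompleteSpace E] {T : E → E} (hT : ContDiff ℝ 1 T)
    (hZ0 : ∀ s, 0 ≤ s → 0 ≤ Z s) (hZ : ContinuousOn Z (Ici 0))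
    (hTZ : ∀ x, ‖fderiv ℝ T x‖ ≤ Z ‖x - x₀‖) {Y r : ℝ} (hY : ‖T x₀ - x₀‖ ≤ Y)
    (hr : Y + ∫ s in 0..r, Z s ≤ r) :
    MapsTo T (closedBall x₀ r) (closedBall x₀ r) := by
  intro x hx
  have hxr : ‖x - x₀‖ ≤ r := mem_closedBall_iff_norm.mp hx
  have hr0 : 0 ≤ r := (norm_nonneg _).trans hxr
  have hmono : ∫ s in 0..‖x - x₀‖, Z s ≤ ∫ s in 0..r, Z s :=
    integral_mono_interval le_rfl (norm_nonneg _) hxr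
      (MeasureTheory.ae_restrict_of_forall_mem measurableSet_Ioc fun s hs => hZ0 s hs.1.le)
      (hZ.mono (uIcc_of_le hr0 ▸ Icc_subset_Ici_self)).intervalIntegrable
  rw [mem_closedBall_iff_norm]
  calc ‖T x - x₀‖ ≤ ‖T x - T x₀‖ + ‖T x₀ - x₀‖ := norm_sub_le_norm_sub_add_norm_sub _ _ _
    _ ≤ (∫ s in 0..r, Z s) + Y :=
        add_le_add ((norm_sub_le_integral_of_norm_fderiv_le hT hZ hTZ x).trans hmono) hY
    _ ≤ r := by linarith

end

theorem validation_fixed_point_general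
    {X : Type*} [NormedAddCommGroup X] [NormedSpace ℝ X] [CompleteSpace X]
    (T : X → X) (hT : ContDiff ℝ 1 T) (xbar : X)
    (Y : ℝ) (Z : ℝ → ℝ)
    (hZ0 : ∀ s, 0 ≤ s → 0 ≤ Z s)
    (hZmono : MonotoneOn Z (Set.Ici 0))
    (hZcont : ContinuousOn Z (Set.Ici 0))
    (hYb : ‖T xbar - xbar‖ ≤ Y)
    (hZb : ∀ x : X, ‖fderiv ℝ T x‖ ≤ Z ‖x - xbar‖)
    (rbar : ℝ) (hrbar : 0 < rbar)
    (h1 : Y + ∫ s in (0:ℝ)..rbar, Z s < rbar)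
    (h2 : Z rbar < 1) :
    ∃! x : X, x ∈ Metric.closedBall xbar rbar ∧ T x = x :=
  exists_unique_isFixedPt_of_lipschitzOnWith isClosed_closedBall.isComplete
    (nonempty_closedBall.mpr hrbar.le)
    (mapsTo_closedBall_of_add_integral_le hT hZ0 hZcont hZb hYb h1.le)
    (lipschitzOnWith_closedBall_of_norm_fderiv_le (hT.differentiable one_ne_zero) hZmono hZb rbar)
    (Real.toNNReal_lt_one.mpr h2)

/-- Contraction-based a posteriori validation theorem (Theorem 2.1 of the paper):
if `‖T x̄ - x̄‖ ≤ Y`, `‖DT x‖ ≤ Z (‖x - x̄‖)` for a nonnegative increasing continuous `Z`,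
and there is `r̄ > 0` with `Y + ∫₀^r̄ Z < r̄` and `Z r̄ < 1`, then `T` has a unique fixed
point in the closed ball of radius `r̄` around `x̄`. -/
theorem validation_fixed_point
    {X : Type*} [NormedAddCommGroup X] [NormedSpace ℝ X] [CompleteSpace X]
    (T : X → X) (hT : ContDiff ℝ 1 T) (xbar : X)
    (Y : ℝ) (hY0 : 0 ≤ Y) (Z : ℝ → ℝ)
    (hZ0 : ∀ s, 0 ≤ s → 0 ≤ Z s)
    (hZmono : MonotoneOn Z (Set.Ici 0))
    (hZcont : ContinuousOn Z (Set.Ici 0))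
    (hYb : ‖T xbar - xbar‖ ≤ Y)
    (hZb : ∀ x : X, ‖fderiv ℝ T x‖ ≤ Z ‖x - xbar‖)
    (rbar : ℝ) (hrbar : 0 < rbar)
    (h1 : Y + ∫ s in (0:ℝ)..rbar, Z s < rbar)
    (h2 : Z rbar < 1) :
    ∃! x : X, x ∈ Metric.closedBall xbar rbar ∧ T x = x :=
  validation_fixed_point_general T hT xbar Y Z hZ0 hZmono hZcont hYb hZb rbar hrbar h1 h2
end

section
/- Let A be a d × d real matrix with strictly positive entries. There exists a left eigenvector η̄ with strictly positive coefficients associated to the spectral radius ρ(A), i.e. η̄ᵀ A = ρ(A) η̄ᵀ. Moreover, for the weighted operator norm |A|_η = max_{1≤j≤d} (1/η^(j)) Σ_{i=1}^d |A^(i,j)| η^(i), one has |A|_{η̄} = ρ(A) = inf over all positive weight vectors η of |A|_η. -/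
/-!
Apply Perron's theorem to `Aᵀ`. For a positive matrix `B`, the Collatz–Wielandt function
`x ↦ minᵢ (B x)ᵢ / xᵢ` is continuous on the compact set `B(Δ)` of positive vectors (`Δ` the
standard simplex), so it attains its maximum `r` at some `y`. Then `r y ≤ B y`, and if this were
not an equality, positivity of `B` would give `r B y < B (B y)` everywhere, so the point `B y`
(rescaled into `B(Δ)`) would do better. Hence `Aᵀ η = r η` with `η > 0`.

Since the `η`-weighted column sums of `A` are exactly `r ηⱼ`, `|A|_η = r`. For any positive
weight `η'` and complex eigenpair `A v = z v`, taking `η'`-weighted 1-norms gives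
`|z| ≤ |A|_η'`. With `η' = η` this identifies `r` as `ρ(A)`, and for general `η'` it is the
infimum property.
-/

open scoped BigOperators

/-- The spectral radius of a real square matrix: the supremum of the moduli of its
complex eigenvalues. -/
noncomputable def specRad {d : ℕ} (A : Matrix (Fin d) (Fin d) ℝ) : ℝ :=
  sSup ((fun z : ℂ => ‖z‖) '' spectrum ℂ (A.map (Complex.ofReal)))

/-- The operator norm of a matrix induced by the weighted 1-norm
`|x|_η = ∑ i, |x i| * η i`, given by the explicit column formula. -/
noncomputable def wOpNorm {d : ℕ} (η : Fin d → ℝ) (A : Matrix (Fin d) (Fin d) ℝ) : ℝ :=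
  ⨆ j, (∑ i, |A i j| * η i) / η j

open Matrix Finset

section Spectrum

variable {K n : Type*} [Field K] [Fintype n] [DecidableEq n]

theorem Matrix.mem_spectrum_iff_exists_mulVec_eq_smul (M : Matrix n n K) (μ : K) :
    μ ∈ spectrum K M ↔ ∃ v ≠ 0, M *ᵥ v = μ • v := by
  rw [← spectrum_toLin', ← Module.End.hasEigenvalue_iff_mem_spectrum]
  constructor
  · intro h
    obtain ⟨v, hv⟩ := h.exists_hasEigenvector
    exact ⟨v, hv.2, by simpa using hv.apply_eq_smul⟩
  · rintro ⟨v, hv0, hv⟩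
    exact Module.End.hasEigenvalue_of_hasEigenvector
      (Module.End.hasEigenvector_iff.2 ⟨by simpa using hv, hv0⟩)

theorem Matrix.spectrum_transpose (M : Matrix n n K) : spectrum K Mᵀ = spectrum K M := by
  ext μ
  simp only [mem_spectrum_iff_isRoot_charpoly, charpoly_transpose]

theorem Matrix.map_mem_spectrum_map {L : Type*} [Field L] (M : Matrix n n K) (f : K →+* L)
    {μ : K} (hμ : μ ∈ spectrum K M) : f μ ∈ spectrum L (M.map f) := by
  rw [mem_spectrum_iff_isRoot_charpoly] at hμ ⊢
  rw [charpoly_map]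
  exact hμ.map

end Spectrum

section Perron

variable {n : Type*} [Fintype n] {B : Matrix n n ℝ}

theorem Matrix.mulVec_pos_of_pos (hB : ∀ i j, 0 < B i j) {x : n → ℝ} (hx : 0 ≤ x)
    (hx0 : x ≠ 0) (i : n) : 0 < (B *ᵥ x) i := by
  obtain ⟨j, hj⟩ := Function.ne_iff.1 hx0
  exact Finset.sum_pos' (fun k _ => mul_nonneg (hB i k).le (hx k))
    ⟨j, mem_univ j, mul_pos (hB i j) (lt_of_le_of_ne (hx j) (Ne.symm hj))⟩

theorem inv_sum_smul_mem_stdSimplex {x : n → ℝ} (hx : 0 ≤ x) (hs : 0 < ∑ i, x i) :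
    (∑ i, x i)⁻¹ • x ∈ stdSimplex ℝ n :=
  ⟨fun i => smul_nonneg (inv_nonneg.2 hs.le) (hx i), by
    simp only [Pi.smul_apply, smul_eq_mul, ← Finset.mul_sum, inv_mul_cancel₀ hs.ne']⟩

variable [Nonempty n]

noncomputable def Matrix.collatzWielandt (B : Matrix n n ℝ) (x : n → ℝ) : ℝ :=
  univ.inf' univ_nonempty fun i => (B *ᵥ x) i / x i

theorem Matrix.collatzWielandt_smul (x : n → ℝ) {c : ℝ} (hc : c ≠ 0) :
    B.collatzWielandt (c • x) = B.collatzWielandt x := by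
  simp only [collatzWielandt, mulVec_smul, Pi.smul_apply, smul_eq_mul, mul_div_mul_left _ _ hc]

theorem Matrix.collatzWielandt_mul_le {x : n → ℝ} {i : n} (hx : 0 < x i) :
    B.collatzWielandt x * x i ≤ (B *ᵥ x) i :=
  (le_div_iff₀ hx).1 (inf'_le _ (mem_univ i))

theorem Matrix.lt_collatzWielandt {x : n → ℝ} {r : ℝ} (hx : ∀ i, 0 < x i)
    (h : ∀ i, r * x i < (B *ᵥ x) i) : r < B.collatzWielandt x :=
  (lt_inf'_iff _).2 fun i _ => (lt_div_iff₀ (hx i)).2 (h i)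

theorem Matrix.continuousOn_collatzWielandt :
    ContinuousOn B.collatzWielandt {x | ∀ i, x i ≠ 0} := by
  refine ContinuousOn.finset_inf'_apply _ fun i _ => ContinuousOn.div ?_ ?_ fun x hx => hx i
  · exact ((continuous_apply i).comp (continuous_const.matrix_mulVec continuous_id)).continuousOn
  · exact (continuous_apply i).continuousOn

theorem Matrix.exists_pos_mulVec_eq_smul_of_pos (hB : ∀ i j, 0 < B i j) :
    ∃ (v : n → ℝ) (r : ℝ), (∀ i, 0 < v i) ∧ 0 < r ∧ B *ᵥ v = r • v := by
  set T := (B *ᵥ ·) '' stdSimplex ℝ n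
  have hT : IsCompact T :=
    (isCompact_stdSimplex ℝ n).image (continuous_const.matrix_mulVec continuous_id)
  have hTne : T.Nonempty := (isPathConnected_stdSimplex n).nonempty.image _
  have hTpos : ∀ y ∈ T, ∀ i, 0 < y i := by
    rintro _ ⟨x, hx, rfl⟩
    exact mulVec_pos_of_pos hB hx.1 fun h0 => by simpa [h0] using hx.2
  obtain ⟨y, hyT, hmax⟩ := hT.exists_isMaxOn hTne
    (continuousOn_collatzWielandt.mono fun y hy i => (hTpos y hy i).ne')
  set r := B.collatzWielandt y
  have hy := hTpos y hyT
  have hBy_pos : ∀ i, 0 < (B *ᵥ y) i := mulVec_pos_of_pos hB (fun i => (hy i).le)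
    fun h => (hy (Classical.arbitrary n)).ne' (congrFun h _)
  have hle : r • y ≤ B *ᵥ y := fun i => by
    simpa [mul_comm] using collatzWielandt_mul_le (B := B) (hy i)
  have heig : B *ᵥ y = r • y := by
    by_contra hne
    have hBy : ∀ i, r * (B *ᵥ y) i < (B *ᵥ (B *ᵥ y)) i := fun i => by
      have := mulVec_pos_of_pos hB (sub_nonneg.2 hle) (sub_ne_zero.2 hne) i
      simpa [mulVec_sub, mulVec_smul] using this
    set s := ∑ i, y i
    have hs : 0 < s := Finset.sum_pos (fun i _ => hy i) univ_nonempty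
    have hyS : B *ᵥ (s⁻¹ • y) ∈ T :=
      ⟨_, inv_sum_smul_mem_stdSimplex (fun i => (hy i).le) hs, rfl⟩
    have hlt : r < B.collatzWielandt (B *ᵥ (s⁻¹ • y)) := by
      rw [mulVec_smul, collatzWielandt_smul _ (inv_ne_zero hs.ne')]
      exact lt_collatzWielandt hBy_pos hBy
    exact (hmax hyS).not_gt hlt
  refine ⟨y, r, hy, ?_, heig⟩
  have hr := hBy_pos (Classical.arbitrary n)
  rw [heig] at hr
  exact pos_of_mul_pos_left hr (hy _).le

end Perron

section WeightedNorm

variable {d : ℕ} {A : Matrix (Fin d) (Fin d) ℝ} {η : Fin d → ℝ}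

theorem sum_abs_mul_le_wOpNorm_mul (hη : ∀ i, 0 < η i) (j : Fin d) :
    ∑ i, |A i j| * η i ≤ wOpNorm η A * η j :=
  (div_le_iff₀ (hη j)).1 (le_ciSup (f := fun j => (∑ i, |A i j| * η i) / η j)
    (Set.finite_range _).bddAbove j)

theorem sum_norm_mulVec_map_le (hη : ∀ i, 0 < η i) (v : Fin d → ℂ) :
    ∑ i, ‖(A.map Complex.ofReal *ᵥ v) i‖ * η i ≤ wOpNorm η A * ∑ j, ‖v j‖ * η j :=
  calc ∑ i, ‖(A.map Complex.ofReal *ᵥ v) i‖ * η i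
      ≤ ∑ i, (∑ j, |A i j| * ‖v j‖) * η i := by
        refine Finset.sum_le_sum fun i _ => mul_le_mul_of_nonneg_right ?_ (hη i).le
        refine (norm_sum_le univ fun j => (A i j : ℂ) * v j).trans_eq
          (Finset.sum_congr rfl fun j _ => ?_)
        simp
    _ = ∑ j, (∑ i, |A i j| * η i) * ‖v j‖ := by
        simp only [Finset.sum_mul]
        rw [Finset.sum_comm]
        exact Finset.sum_congr rfl fun j _ => Finset.sum_congr rfl fun i _ => by ring
    _ ≤ ∑ j, wOpNorm η A * η j * ‖v j‖ :=
        Finset.sum_le_sum fun j _ =>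
          mul_le_mul_of_nonneg_right (sum_abs_mul_le_wOpNorm_mul hη j) (norm_nonneg _)
    _ = wOpNorm η A * ∑ j, ‖v j‖ * η j := by
        rw [Finset.mul_sum]
        exact Finset.sum_congr rfl fun j _ => by ring

theorem norm_le_wOpNorm_of_mem_spectrum (hη : ∀ i, 0 < η i) {z : ℂ}
    (hz : z ∈ spectrum ℂ (A.map Complex.ofReal)) : ‖z‖ ≤ wOpNorm η A := by
  obtain ⟨v, hv0, hv⟩ := (mem_spectrum_iff_exists_mulVec_eq_smul _ z).1 hz
  obtain ⟨j, hj⟩ := Function.ne_iff.1 hv0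
  have hS : 0 < ∑ j, ‖v j‖ * η j := Finset.sum_pos'
    (fun i _ => mul_nonneg (norm_nonneg _) (hη i).le)
    ⟨j, mem_univ j, mul_pos (norm_pos_iff.2 hj) (hη j)⟩
  refine le_of_mul_le_mul_right ?_ hS
  calc ‖z‖ * ∑ j, ‖v j‖ * η j = ∑ i, ‖(A.map Complex.ofReal *ᵥ v) i‖ * η i := by
        simp only [hv, Finset.mul_sum, Pi.smul_apply, smul_eq_mul, norm_mul, mul_assoc]
    _ ≤ wOpNorm η A * ∑ j, ‖v j‖ * η j := sum_norm_mulVec_map_le hη v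

theorem wOpNorm_eq_of_vecMul_eq_smul [NeZero d] (hA : ∀ i j, 0 ≤ A i j) (hη : ∀ i, 0 < η i)
    {r : ℝ} (h : η ᵥ* A = r • η) : wOpNorm η A = r := by
  have hcol : ∀ j, (∑ i, |A i j| * η i) / η j = r := fun j => by
    rw [div_eq_iff (hη j).ne', ← smul_eq_mul, ← Pi.smul_apply, ← h]
    exact Finset.sum_congr rfl fun i _ => by rw [abs_of_nonneg (hA i j), mul_comm]
  simp only [wOpNorm, hcol, ciSup_const]

theorem specRad_eq_of_mem_spectrum {r : ℝ} (hr : 0 ≤ r)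
    (hmem : (r : ℂ) ∈ spectrum ℂ (A.map Complex.ofReal))
    (hle : ∀ z ∈ spectrum ℂ (A.map Complex.ofReal), ‖z‖ ≤ r) : specRad A = r :=
  IsGreatest.csSup_eq ⟨⟨r, hmem, by simp [abs_of_nonneg hr]⟩, by
    rintro _ ⟨z, hz, rfl⟩
    exact hle z hz⟩

end WeightedNorm

/-- Proposition 2.3 of the paper (Perron–Frobenius): a matrix with positive entries has
a positive left eigenvector `η̄` for the spectral radius, the associated weighted operator
norm equals the spectral radius, and this is the infimum over all positive weights. -/
theorem perron_frobenius_optimal_weights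
    (d : ℕ) (A : Matrix (Fin (d + 1)) (Fin (d + 1)) ℝ) (hA : ∀ i j, 0 < A i j) :
    ∃ η : Fin (d + 1) → ℝ, (∀ i, 0 < η i) ∧
      (∀ j, ∑ i, η i * A i j = specRad A * η j) ∧
      wOpNorm η A = specRad A ∧
      ∀ η' : Fin (d + 1) → ℝ, (∀ i, 0 < η' i) → specRad A ≤ wOpNorm η' A := by
  obtain ⟨η, r, hη, hr, heig⟩ := exists_pos_mulVec_eq_smul_of_pos (B := Aᵀ) fun i j => hA j i
  rw [mulVec_transpose] at heig
  have hspec : (r : ℂ) ∈ spectrum ℂ (A.map Complex.ofReal) := by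
    refine map_mem_spectrum_map A Complex.ofRealHom ?_
    rw [← spectrum_transpose, mem_spectrum_iff_exists_mulVec_eq_smul]
    exact ⟨η, fun h => (hη 0).ne' (congrFun h 0), by rwa [mulVec_transpose]⟩
  have hnorm : wOpNorm η A = r := wOpNorm_eq_of_vecMul_eq_smul (fun i j => (hA i j).le) hη heig
  have hrad : specRad A = r := specRad_eq_of_mem_spectrum hr.le hspec fun z hz =>
    hnorm ▸ norm_le_wOpNorm_of_mem_spectrum hη hz
  refine ⟨η, hη, fun j => hrad ▸ congrFun heig j, hnorm.trans hrad.symm, fun η' hη' => ?_⟩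
  simpa [hrad, abs_of_pos hr] using norm_le_wOpNorm_of_mem_spectrum hη' hspec
end

section
/- Let M ∈ ℕ, and for each m ∈ {1,...,M} let (X^(m), ‖·‖_m) be a Banach space; equip the product X = ∏_m X^(m) with the max norm. Let F : X → X be C¹, x̄ ∈ X, A† : X → X linear, and A : X → X an injective bounded linear operator. Suppose for each m there are nonnegative constants Y^(m), Z₀^(m), Z₁^(m), Z₂^(m) with ‖(A F(x̄))^(m)‖_m ≤ Y^(m), ‖(I − A A†)^(m)‖ ≤ Z₀^(m), ‖(A(DF(x̄) − A†))^(m)‖ ≤ Z₁^(m), and ‖(A(DF(x) − DF(x̄)))^(m)‖ ≤ Z₂^(m)‖x − x̄‖ for all x within radius r* of x̄. If there exists r̄ ∈ (0, r*] such that for every m: (Z₂^(m)/2) r̄² − (1 − Z₀^(m) − Z₁^(m)) r̄ + Y^(m) < 0 and Z₀^(m) + Z₁^(m) + Z₂^(m) r̄ < 1, then F has a unique zero in the closed ball B(x̄, r̄) in X. -/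
/-!
Set `T x = x - A (F x)`; since `A` is injective, the fixed points of `T` are exactly the zeros of
`F`. Its derivative `I - A DF(x)` splits as `(I - A A†) - A (DF(x̄) - A†) - A (DF(x) - DF(x̄))`, so
in component `m` it is bounded by `Z₀ + Z₁ + Z₂ ‖x - x̄‖` on the ball. Integrating this affine bound
along the segment from `x̄` gives `‖(T x - x̄)ₘ‖ ≤ Y + (Z₀ + Z₁) r̄ + Z₂ r̄² / 2 < r̄`, so `T` maps
the closed ball of radius `r̄` into itself, and the mean value theorem makes `T` a contraction there
with constant `maxₘ (Z₀ + Z₁ + Z₂ r̄) < 1`, because the norm of the product is the max norm.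
The Banach fixed point theorem concludes.
-/

open ContinuousLinearMap Metric Set
open scoped NNReal

theorem existsUnique_isFixedPt_of_lipschitzOnWith {α : Type*} [MetricSpace α] {f : α → α}
    {s : Set α} {K : ℝ≥0} (hK : K < 1) (hsc : IsComplete s) (hs : s.Nonempty)
    (hsf : MapsTo f s s) (hf : LipschitzOnWith K f s) :
    ∃! x, x ∈ s ∧ Function.IsFixedPt f x := by
  obtain ⟨x₀, hx₀⟩ := hs
  have hc : ContractingWith K (hsf.restrict f s s) := ⟨hK, hf.mapsToRestrict hsf⟩
  obtain ⟨x, hxs, hx, -⟩ := hc.exists_fixedPoint' hsc hsf hx₀ (edist_ne_top _ _)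
  refine ⟨x, ⟨hxs, hx⟩, fun y ⟨hys, hy⟩ => ?_⟩
  exact congrArg Subtype.val
    (hc.fixedPoint_unique' (x := ⟨y, hys⟩) (y := ⟨x, hxs⟩) (Subtype.ext hy) (Subtype.ext hx))

theorem nonneg_of_forall_mem_closedBall_nonneg_mul_norm_sub {X : Type*} [NormedAddCommGroup X]
    [NormedSpace ℝ X] [Nontrivial X] {x₀ : X} {r c : ℝ} (hr : 0 < r)
    (h : ∀ x ∈ closedBall x₀ r, 0 ≤ c * ‖x - x₀‖) : 0 ≤ c := by
  obtain ⟨v, hv⟩ := exists_norm_eq X hr.le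
  have := h (x₀ + v) (by simp [hv])
  rw [add_sub_cancel_left, hv] at this
  exact nonneg_of_mul_nonneg_left this hr

namespace ContinuousLinearMap

variable {𝕜 X Y Z : Type*} [NontriviallyNormedField 𝕜] [NormedAddCommGroup X] [NormedSpace 𝕜 X]
  [NormedAddCommGroup Y] [NormedSpace 𝕜 Y] [NormedAddCommGroup Z] [NormedSpace 𝕜 Z]

theorem norm_comp_id_sub_comp_le (P : X →L[𝕜] Y) (A : Z →L[𝕜] X) (B D₀ D : X →L[𝕜] Z) :
    ‖P.comp (ContinuousLinearMap.id 𝕜 X - A.comp D)‖ ≤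
      ‖P.comp (ContinuousLinearMap.id 𝕜 X - A.comp B)‖ + ‖P.comp (A.comp (D₀ - B))‖ +
        ‖P.comp (A.comp (D - D₀))‖ := by
  have hsplit : P.comp (ContinuousLinearMap.id 𝕜 X - A.comp D) =
      P.comp (ContinuousLinearMap.id 𝕜 X - A.comp B) - P.comp (A.comp (D₀ - B)) -
        P.comp (A.comp (D - D₀)) := by
    ext v
    simp only [comp_apply, sub_apply, coe_id', id_eq, map_sub]
    abel
  rw [hsplit]
  exact (norm_sub_le _ _).trans (add_le_add_left (norm_sub_le _ _) _)

theorem norm_le_of_forall_norm_proj_comp_le {ι : Type*} [Fintype ι] {E : ι → Type*}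
    [∀ i, NormedAddCommGroup (E i)] [∀ i, NormedSpace 𝕜 (E i)] {L : X →L[𝕜] ∀ i, E i} {C : ℝ}
    (hL : ∀ i, ‖(proj i : (∀ i, E i) →L[𝕜] E i).comp L‖ ≤ C) (hC : 0 ≤ C) : ‖L‖ ≤ C :=
  opNorm_le_bound _ hC fun x =>
    (pi_norm_le_iff_of_nonneg (by positivity)).2 fun i => ((proj i).comp L).le_of_opNorm_le (hL i) x

end ContinuousLinearMap

theorem norm_sub_le_of_norm_fderiv_le_affine {X G : Type*} [NormedAddCommGroup X]
    [NormedSpace ℝ X] [NormedAddCommGroup G] [NormedSpace ℝ G] {f : X → G}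
    {f' : X → X →L[ℝ] G} {x₀ x : X} {r a b : ℝ}
    (hf : ∀ z ∈ closedBall x₀ r, HasFDerivAt f (f' z) z)
    (hf' : ∀ z ∈ closedBall x₀ r, ‖f' z‖ ≤ a + b * ‖z - x₀‖) (hx : x ∈ closedBall x₀ r) :
    ‖f x - f x₀‖ ≤ a * ‖x - x₀‖ + b / 2 * ‖x - x₀‖ ^ 2 := by
  set v := x - x₀
  set s := ‖v‖
  have hseg : ∀ t ∈ Icc (0 : ℝ) 1, x₀ + t • v ∈ closedBall x₀ r := fun t ht =>
    (convex_closedBall x₀ r).add_smul_sub_mem (mem_closedBall_self (dist_nonneg.trans hx)) hx ht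
  have hg : ∀ t ∈ Icc (0 : ℝ) 1,
      HasDerivAt (fun t : ℝ => f (x₀ + t • v) - f x₀) (f' (x₀ + t • v) v) t := fun t ht => by
    have hγ : HasDerivAt (fun t : ℝ => x₀ + t • v) v t := by
      simpa using ((hasDerivAt_id t).smul_const v).const_add x₀
    exact ((hf _ (hseg t ht)).comp_hasDerivAt t hγ).sub_const (f x₀)
  have hB : ∀ t : ℝ, HasDerivAt (fun t => a * s * t + b / 2 * s ^ 2 * t ^ 2)
      (a * s + b * s ^ 2 * t) t := fun t =>
    (((hasDerivAt_id' t).const_mul (a * s)).add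
      ((hasDerivAt_pow 2 t).const_mul (b / 2 * s ^ 2))).congr_deriv (by ring)
  have key := image_norm_le_of_norm_deriv_right_le_deriv_boundary
    (fun t ht => (hg t ht).continuousAt.continuousWithinAt)
    (fun t ht => (hg t (Ico_subset_Icc_self ht)).hasDerivWithinAt) (by simp) hB
    (fun t ht => ?_) (right_mem_Icc.2 zero_le_one)
  · simpa [v] using key
  have ht' := Ico_subset_Icc_self ht
  calc ‖f' (x₀ + t • v) v‖ ≤ ‖f' (x₀ + t • v)‖ * s := le_opNorm _ _
    _ ≤ (a + b * (t * s)) * s := by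
        gcongr
        simpa [norm_smul, abs_of_nonneg ht.1] using hf' _ (hseg t ht')
    _ = a * s + b * s ^ 2 * t := by ring

section Componentwise

variable {ι : Type*} [Fintype ι] {E : ι → Type*} [∀ i, NormedAddCommGroup (E i)]
  [∀ i, NormedSpace ℝ (E i)] {T : (∀ i, E i) → ∀ i, E i}
  {T' : (∀ i, E i) → (∀ i, E i) →L[ℝ] ∀ i, E i} {x₀ : ∀ i, E i} {r : ℝ} {Y Z W : ι → ℝ}

theorem mapsTo_closedBall_of_componentwise_bounds
    (hT : ∀ z ∈ closedBall x₀ r, HasFDerivAt T (T' z) z) (hY : ∀ i, ‖T x₀ i - x₀ i‖ ≤ Y i)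
    (hZW : ∀ i, ∀ z ∈ closedBall x₀ r, ‖(proj i : (∀ i, E i) →L[ℝ] E i).comp (T' z)‖ ≤
      Z i + W i * ‖z - x₀‖)
    (hZ : ∀ i, 0 ≤ Z i) (hW : ∀ i, 0 ≤ W i) (hP : ∀ i, Y i + Z i * r + W i / 2 * r ^ 2 ≤ r) :
    MapsTo T (closedBall x₀ r) (closedBall x₀ r) := by
  intro x hx
  have hs : ‖x - x₀‖ ≤ r := mem_closedBall_iff_norm.1 hx
  rw [mem_closedBall_iff_norm, pi_norm_le_iff_of_nonneg (dist_nonneg.trans hx)]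
  intro i
  have hTi := norm_sub_le_of_norm_fderiv_le_affine
    (fun z hz => (proj i).hasFDerivAt.comp z (hT z hz)) (hZW i) hx
  calc ‖(T x - x₀) i‖ ≤ ‖T x i - T x₀ i‖ + ‖T x₀ i - x₀ i‖ :=
        norm_sub_le_norm_sub_add_norm_sub _ _ _
    _ ≤ Z i * ‖x - x₀‖ + W i / 2 * ‖x - x₀‖ ^ 2 + Y i := add_le_add hTi (hY i)
    _ ≤ Z i * r + W i / 2 * r ^ 2 + Y i := by
        have := hW i
        gcongr
        exact hZ i
    _ ≤ r := by linarith [hP i]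

theorem existsUnique_isFixedPt_of_componentwise_bounds [∀ i, CompleteSpace (E i)]
    (hT : ∀ z ∈ closedBall x₀ r, HasFDerivAt T (T' z) z) (hY : ∀ i, ‖T x₀ i - x₀ i‖ ≤ Y i)
    (hZW : ∀ i, ∀ z ∈ closedBall x₀ r, ‖(proj i : (∀ i, E i) →L[ℝ] E i).comp (T' z)‖ ≤
      Z i + W i * ‖z - x₀‖)
    (hW : ∀ i, 0 ≤ W i) (hr : 0 ≤ r) (hP : ∀ i, Y i + Z i * r + W i / 2 * r ^ 2 ≤ r)
    (hQ : ∀ i, Z i + W i * r < 1) :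
    ∃! x, x ∈ closedBall x₀ r ∧ Function.IsFixedPt T x := by
  have hZ : ∀ i, 0 ≤ Z i := fun i => by
    simpa using (norm_nonneg _).trans (hZW i x₀ (mem_closedBall_self hr))
  set κ : ι → ℝ≥0 := fun i => (Z i + W i * r).toNNReal
  set K : ℝ≥0 := Finset.univ.sup κ
  have hK : K < 1 := (Finset.sup_lt_iff zero_lt_one).2 fun i _ => Real.toNNReal_lt_one.2 (hQ i)
  have hKi : ∀ i, Z i + W i * r ≤ K := fun i =>
    (Real.le_coe_toNNReal _).trans
      (NNReal.coe_le_coe.2 (Finset.le_sup (f := κ) (Finset.mem_univ i)))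
  have hlip : LipschitzOnWith K T (closedBall x₀ r) := by
    refine (convex_closedBall x₀ r).lipschitzOnWith_of_nnnorm_hasFDerivWithin_le
      (fun z hz => (hT z hz).hasFDerivWithinAt) fun z hz => ?_
    rw [← NNReal.coe_le_coe, coe_nnnorm]
    refine norm_le_of_forall_norm_proj_comp_le (fun i => ?_) K.2
    calc _ ≤ Z i + W i * ‖z - x₀‖ := hZW i z hz
      _ ≤ Z i + W i * r := by gcongr; exacts [hW i, mem_closedBall_iff_norm.1 hz]
      _ ≤ K := hKi i
  exact existsUnique_isFixedPt_of_lipschitzOnWith hK isClosed_closedBall.isComplete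
    (nonempty_closedBall.2 hr) (mapsTo_closedBall_of_componentwise_bounds hT hY hZW hZ hW hP) hlip

end Componentwise

theorem componentwise_validation_zero_general
    (M : ℕ) (E : Fin M → Type*)
    [∀ m, NormedAddCommGroup (E m)] [∀ m, NormedSpace ℝ (E m)]
    [∀ m, CompleteSpace (E m)]
    (F : (∀ m, E m) → (∀ m, E m)) (hF : ContDiff ℝ 1 F)
    (xbar : ∀ m, E m)
    (Adag A : (∀ m, E m) →L[ℝ] (∀ m, E m))
    (hAinj : Function.Injective A)
    (Y Z₀ Z₁ Z₂ : Fin M → ℝ) (rstar : ℝ)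
    (hY : ∀ m, ‖A (F xbar) m‖ ≤ Y m)
    (hZ0 : ∀ m, ‖(ContinuousLinearMap.proj m : (∀ i, E i) →L[ℝ] E m).comp
      (ContinuousLinearMap.id ℝ (∀ i, E i) - A.comp Adag)‖ ≤ Z₀ m)
    (hZ1 : ∀ m, ‖(ContinuousLinearMap.proj m : (∀ i, E i) →L[ℝ] E m).comp
      (A.comp (fderiv ℝ F xbar - Adag))‖ ≤ Z₁ m)
    (hZ2 : ∀ m, ∀ x ∈ Metric.closedBall xbar rstar,
      ‖(ContinuousLinearMap.proj m : (∀ i, E i) →L[ℝ] E m).comp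
        (A.comp (fderiv ℝ F x - fderiv ℝ F xbar))‖ ≤ Z₂ m * ‖x - xbar‖)
    (rbar : ℝ) (hrbar0 : 0 < rbar) (hrbar : rbar ≤ rstar)
    (hP : ∀ m, Z₂ m / 2 * rbar ^ 2 - (1 - Z₀ m - Z₁ m) * rbar + Y m < 0)
    (hQ : ∀ m, Z₀ m + Z₁ m + Z₂ m * rbar < 1) :
    ∃! x : ∀ m, E m, x ∈ Metric.closedBall xbar rbar ∧ F x = 0 := by
  rcases subsingleton_or_nontrivial (∀ m, E m) with hX | hX
  · exact ⟨xbar, ⟨mem_closedBall_self hrbar0.le, Subsingleton.elim _ _⟩,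
      fun _ _ => Subsingleton.elim _ _⟩
  have hball := closedBall_subset_closedBall (x := xbar) hrbar
  have hZ₂ : ∀ m, 0 ≤ Z₂ m := fun m => nonneg_of_forall_mem_closedBall_nonneg_mul_norm_sub hrbar0
    fun x hx => (norm_nonneg _).trans (hZ2 m x (hball hx))
  have hDF : ∀ z, HasFDerivAt F (fderiv ℝ F z) z := fun z =>
    (hF.differentiable one_ne_zero z).hasFDerivAt
  have hNewton := existsUnique_isFixedPt_of_componentwise_bounds (T := fun x => x - A (F x))
    (T' := fun z => ContinuousLinearMap.id ℝ _ - A.comp (fderiv ℝ F z)) (Z := Z₀ + Z₁) (W := Z₂)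
    (fun z _ => (hasFDerivAt_id z).sub (A.hasFDerivAt.comp z (hDF z)))
    (fun m => by simpa using hY m)
    (fun m z hz => (norm_comp_id_sub_comp_le _ A Adag (fderiv ℝ F xbar) _).trans
      (add_le_add (add_le_add (hZ0 m) (hZ1 m)) (hZ2 m z (hball hz))))
    hZ₂ hrbar0.le (fun m => by simp only [Pi.add_apply]; linarith [hP m])
    (fun m => by simpa only [Pi.add_apply] using hQ m)
  refine (existsUnique_congr fun x => ?_).1 hNewton
  rw [Function.IsFixedPt, sub_eq_self, map_eq_zero_iff A hAinj]

/-- Corollary 5.2 of the paper (component-wise Newton–Kantorovich validation on a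
product of Banach spaces): if the component-wise bounds `Y⁽ᵐ⁾, Z₀⁽ᵐ⁾, Z₁⁽ᵐ⁾, Z₂⁽ᵐ⁾`
hold and the radii polynomial conditions are satisfied at some `r̄ ∈ (0, r*]` for every
component `m`, then `F` has a unique zero in the closed ball of radius `r̄` around `x̄`. -/
theorem componentwise_validation_zero
    (M : ℕ) (E : Fin M → Type*)
    [∀ m, NormedAddCommGroup (E m)] [∀ m, NormedSpace ℝ (E m)]
    [∀ m, CompleteSpace (E m)]
    (F : (∀ m, E m) → (∀ m, E m)) (hF : ContDiff ℝ 1 F)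
    (xbar : ∀ m, E m)
    (Adag A : (∀ m, E m) →L[ℝ] (∀ m, E m))
    (hAinj : Function.Injective A)
    (Y Z₀ Z₁ Z₂ : Fin M → ℝ) (rstar : ℝ) (hrstar : 0 < rstar)
    (hY : ∀ m, ‖A (F xbar) m‖ ≤ Y m)
    (hZ0 : ∀ m, ‖(ContinuousLinearMap.proj m : (∀ i, E i) →L[ℝ] E m).comp
      (ContinuousLinearMap.id ℝ (∀ i, E i) - A.comp Adag)‖ ≤ Z₀ m)
    (hZ1 : ∀ m, ‖(ContinuousLinearMap.proj m : (∀ i, E i) →L[ℝ] E m).comp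
      (A.comp (fderiv ℝ F xbar - Adag))‖ ≤ Z₁ m)
    (hZ2 : ∀ m, ∀ x ∈ Metric.closedBall xbar rstar,
      ‖(ContinuousLinearMap.proj m : (∀ i, E i) →L[ℝ] E m).comp
        (A.comp (fderiv ℝ F x - fderiv ℝ F xbar))‖ ≤ Z₂ m * ‖x - xbar‖)
    (rbar : ℝ) (hrbar0 : 0 < rbar) (hrbar : rbar ≤ rstar)
    (hP : ∀ m, Z₂ m / 2 * rbar ^ 2 - (1 - Z₀ m - Z₁ m) * rbar + Y m < 0)
    (hQ : ∀ m, Z₀ m + Z₁ m + Z₂ m * rbar < 1) :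
    ∃! x : ∀ m, E m, x ∈ Metric.closedBall xbar rbar ∧ F x = 0 :=
  componentwise_validation_zero_general M E F hF xbar Adag A hAinj Y Z₀ Z₁ Z₂ rstar hY hZ0 hZ1 hZ2
    rbar hrbar0 hrbar hP hQ
end
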